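/- Let 0 < a < b < 1 and set c = [ (√(1−b) − √(1−a)) / (√a − √b) ]² and t = c/(1+c). Then t ∈ (a, b) and √((1−t)(1−a)) + √(t·a) = √((1−t)(1−b)) + √(t·b); equivalently, the uniform pairwise rates satisfy r(a, t) = r(t, b). -/

import Mathlib

/-!
Identify `p ∈ [0,1]` with the unit vector `(√(1-p), √p)`; the quantity inside the logarithm of
`uniRate p q` is then the inner product of the vectors of `p` and `q`. With `k` the slope
`(√(1-a) - √(1-b)) / (√b - √a)`, the level `t = k²/(1+k²)` has vector `(1, k)/√(1+k²)`, which is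
orthogonal to the difference of the vectors of `a` and `b`, so it has the same inner product with
both. It lies strictly between `a` and `b` because two distinct unit vectors of the positive
quadrant have inner product `< 1`.
-/

noncomputable def uniRate (p q : ℝ) : ℝ :=
  -2 * Real.log (Real.sqrt ((1 - p) * (1 - q)) + Real.sqrt (p * q))

open Real

noncomputable def levelSlope (a b : ℝ) : ℝ :=
  (√(1 - a) - √(1 - b)) / (√b - √a)

theorem sqrt_mul_sqrt_add_sqrt_mul_sqrt_lt_one {p q : ℝ} (hp0 : 0 ≤ p) (hp1 : p ≤ 1)
    (hq0 : 0 ≤ q) (hq1 : q ≤ 1) (hpq : p ≠ q) :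
    √(1 - p) * √(1 - q) + √p * √q < 1 := by
  have hne : √p - √q ≠ 0 := sub_ne_zero.2 fun h => hpq (by rwa [sqrt_inj hp0 hq0] at h)
  linarith [sq_nonneg (√(1 - p) - √(1 - q)), sq_pos_of_ne_zero hne, sq_sqrt hp0, sq_sqrt hq0,
    sq_sqrt (sub_nonneg.2 hp1), sq_sqrt (sub_nonneg.2 hq1)]

section levelSlope

variable {a b : ℝ}

theorem levelSlope_mul_sub (hab : √a < √b) :
    levelSlope a b * (√b - √a) = √(1 - a) - √(1 - b) :=
  div_mul_cancel₀ _ (sub_ne_zero.2 hab.ne')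

theorem levelSlope_pos (ha : 0 ≤ a) (hab : a < b) (hb : b ≤ 1) : 0 < levelSlope a b :=
  div_pos (sub_pos.2 (sqrt_lt_sqrt (by linarith) (by linarith)))
    (sub_pos.2 (sqrt_lt_sqrt ha hab))

theorem sqrt_lt_levelSlope_mul (ha : 0 ≤ a) (hab : a < b) (hb : b ≤ 1) :
    √a < levelSlope a b * √(1 - a) := by
  have hsu := sqrt_lt_sqrt ha hab
  have hk := levelSlope_mul_sub hsu
  have hlt := sqrt_mul_sqrt_add_sqrt_mul_sqrt_lt_one ha (by linarith) (by linarith) hb hab.ne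
  refine lt_of_mul_lt_mul_right ?_ (sub_pos.2 hsu).le
  have : levelSlope a b * √(1 - a) * (√b - √a) = √(1 - a) * (√(1 - a) - √(1 - b)) := by
    rw [← hk]; ring
  linarith [sq_sqrt ha, sq_sqrt (by linarith : 0 ≤ 1 - a)]

theorem levelSlope_mul_lt_sqrt (ha : 0 ≤ a) (hab : a < b) (hb : b ≤ 1) :
    levelSlope a b * √(1 - b) < √b := by
  have hsu := sqrt_lt_sqrt ha hab
  have hk := levelSlope_mul_sub hsu
  have hlt := sqrt_mul_sqrt_add_sqrt_mul_sqrt_lt_one ha (by linarith) (by linarith) hb hab.ne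
  refine lt_of_mul_lt_mul_right ?_ (sub_pos.2 hsu).le
  have : levelSlope a b * √(1 - b) * (√b - √a) = √(1 - b) * (√(1 - a) - √(1 - b)) := by
    rw [← hk]; ring
  linarith [sq_sqrt (by linarith : 0 ≤ b), sq_sqrt (sub_nonneg.2 hb)]

end levelSlope

section sqDivOneAddSq

variable {k p : ℝ}

theorem one_sub_sq_div_one_add_sq (k : ℝ) : 1 - k ^ 2 / (1 + k ^ 2) = 1 / (1 + k ^ 2) := by
  field_simp
  ring

theorem lt_sq_div_one_add_sq_iff (hk : 0 ≤ k) (hp : 0 ≤ p) (hp1 : p ≤ 1) :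
    p < k ^ 2 / (1 + k ^ 2) ↔ √p < k * √(1 - p) := by
  rw [lt_div_iff₀ (by positivity), ← pow_lt_pow_iff_left₀ (sqrt_nonneg p) (by positivity)
    two_ne_zero, mul_pow, sq_sqrt hp, sq_sqrt (sub_nonneg.2 hp1)]
  constructor <;> intro h <;> linarith

theorem sq_div_one_add_sq_lt_iff (hk : 0 ≤ k) (hp : 0 ≤ p) (hp1 : p ≤ 1) :
    k ^ 2 / (1 + k ^ 2) < p ↔ k * √(1 - p) < √p := by
  rw [div_lt_iff₀ (by positivity), ← pow_lt_pow_iff_left₀ (by positivity) (sqrt_nonneg p)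
    two_ne_zero, mul_pow, sq_sqrt hp, sq_sqrt (sub_nonneg.2 hp1)]
  constructor <;> intro h <;> linarith

theorem sqrt_mul_add_sqrt_mul_sq_div_one_add_sq (hk : 0 ≤ k) (p : ℝ) :
    √((1 - k ^ 2 / (1 + k ^ 2)) * (1 - p)) + √(k ^ 2 / (1 + k ^ 2) * p)
      = (√(1 - p) + k * √p) / √(1 + k ^ 2) := by
  rw [one_sub_sq_div_one_add_sq, sqrt_mul (by positivity), sqrt_mul (by positivity),
    sqrt_div' _ (by positivity), sqrt_div' _ (by positivity), sqrt_one, sqrt_sq hk]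
  ring

end sqDivOneAddSq

/-- **The intermediate level equalizing the two pairwise rates.**
For `0 < a < b < 1`, `c = [(√(1-b) - √(1-a))/(√a - √b)]²` and `t = c/(1+c)`, we have
`t ∈ (a,b)` and `√((1-t)(1-a)) + √(t·a) = √((1-t)(1-b)) + √(t·b)`;
equivalently `r(a,t) = r(t,b)`. -/
theorem intermediate_level_equalizes_rates
    (a b : ℝ) (ha : 0 < a) (hab : a < b) (hb : b < 1)
    (c t : ℝ)
    (hc : c = ((Real.sqrt (1 - b) - Real.sqrt (1 - a)) /
      (Real.sqrt a - Real.sqrt b)) ^ 2)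
    (ht : t = c / (1 + c)) :
    (a < t ∧ t < b) ∧
      Real.sqrt ((1 - t) * (1 - a)) + Real.sqrt (t * a)
        = Real.sqrt ((1 - t) * (1 - b)) + Real.sqrt (t * b) ∧
      uniRate a t = uniRate t b := by
  have hck : c = levelSlope a b ^ 2 := by rw [hc, ← neg_div_neg_eq, levelSlope, neg_sub, neg_sub]
  subst ht hck
  set k := levelSlope a b
  have hk : 0 ≤ k := (levelSlope_pos ha.le hab hb.le).le
  have heq : √((1 - k ^ 2 / (1 + k ^ 2)) * (1 - a)) + √(k ^ 2 / (1 + k ^ 2) * a)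
      = √((1 - k ^ 2 / (1 + k ^ 2)) * (1 - b)) + √(k ^ 2 / (1 + k ^ 2) * b) := by
    rw [sqrt_mul_add_sqrt_mul_sq_div_one_add_sq hk, sqrt_mul_add_sqrt_mul_sq_div_one_add_sq hk]
    linear_combination -(levelSlope_mul_sub (sqrt_lt_sqrt ha.le hab)) / √(1 + k ^ 2)
  refine ⟨⟨(lt_sq_div_one_add_sq_iff hk ha.le (by linarith)).2
      (sqrt_lt_levelSlope_mul ha.le hab hb.le),
    (sq_div_one_add_sq_lt_iff hk (by linarith) hb.le).2
      (levelSlope_mul_lt_sqrt ha.le hab hb.le)⟩, heq, ?_⟩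
  rw [uniRate, uniRate, mul_comm (1 - a), mul_comm a, heq]
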